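/- Let A be the subalgebra of Γ = F[x,y]/(x² + y⁴ − 1) generated by 1, y², xy, and D the derivation of Γ with D(x) = 2y³, D(y) = −x. Then A is differentially simple with respect to D: every nonzero D-invariant ideal of A equals A. -/

import Mathlib

set_option synthInstance.maxHeartbeats 400000

open MvPolynomial

/-- The derivation `D = 2y³ ∂/∂x − x ∂/∂y` of `F[x,y]`. -/
noncomputable def Dxy (F : Type*) [Field F] :
    Derivation F (MvPolynomial (Fin 2) F) (MvPolynomial (Fin 2) F) :=
  mkDerivation F ![2 * X 1 ^ 3, - X 0]

/-- The quotient ring `Γ = F[x,y]/(x² + y⁴ − 1)`. -/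
abbrev Gam (F : Type*) [Field F] : Type _ :=
  MvPolynomial (Fin 2) F ⧸
    Ideal.span {(X 0 ^ 2 + X 1 ^ 4 - 1 : MvPolynomial (Fin 2) F)}

/-- The image of `x` in `Γ`. -/
noncomputable abbrev xG (F : Type*) [Field F] : Gam F := Ideal.Quotient.mk _ (X 0)

/-- The image of `y` in `Γ`. -/
noncomputable abbrev yG (F : Type*) [Field F] : Gam F := Ideal.Quotient.mk _ (X 1)

/-- The subalgebra `A` of `Γ` generated by `1`, `y²`, `xy`. -/
noncomputable abbrev AG (F : Type*) [Field F] : Subalgebra F (Gam F) :=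
  Algebra.adjoin F ({yG F ^ 2, xG F * yG F} : Set (Gam F))

/-!
Put `u = y²` and `w = xy`. Then `A = F[u] + F[u]·w` with `w² = t(u)` for `t = u - u³`, and
`D u = -2w`, `D w = -t'(u)`. If `I` is a nonzero `D`-stable ideal, the norm
`(p + qw)(p - qw) = p² - q²t` of a nonzero element of `I` is a nonzero polynomial in `u`
(`t` has odd degree), so `J = {f : f(u) ∈ I}` is a nonzero ideal of `F[u]`, generated by some `f`.
Applying `D` once and twice to `f(u)` gives `f ∣ t f'` and `f ∣ t' f' + 2 t f''`. The first
forces every root `β` of `f` (in an algebraic closure) to be a root of `t`. As `t` is separable,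
a root of multiplicity `m` of `f` has multiplicity exactly `m - 1` in `t' f' + 2 t f''`
(the leading coefficient there is `m (2m - 1) t'(β)` times a unit), contradicting the second.
So `f` is a unit and `I = A`.
-/

namespace Polynomial

theorem mul_derivative_pow_mul {R : Type*} [CommRing R] (p P : R[X]) (k : ℕ) :
    p * derivative (p ^ k * P) = p ^ k * (k * derivative p * P + p * derivative P) := by
  rcases k with _ | k
  · simp
  · rw [derivative_mul, derivative_pow, C_eq_natCast, Nat.add_sub_cancel]
    push_cast
    ring

theorem sq_sub_sq_mul_ne_zero {R : Type*} [CommRing R] [IsDomain R] {p q t : R[X]}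
    (ht : Odd t.natDegree) (hpq : p ≠ 0 ∨ q ≠ 0) :
    p ^ 2 - q ^ 2 * t ≠ 0 := by
  intro h
  have ht0 : t ≠ 0 := by rintro rfl; simp at ht
  rcases eq_or_ne q 0 with rfl | hq
  · simp_all
  · have hdeg := congrArg natDegree (sub_eq_zero.mp h)
    rw [natDegree_mul (pow_ne_zero 2 hq) ht0, natDegree_pow, natDegree_pow] at hdeg
    obtain ⟨n, hn⟩ := ht
    omega

variable {F : Type*} [Field F] [CharZero F]

theorem IsRoot.of_dvd_mul_derivative {f t : F[X]} {β : F} (hf : f ≠ 0)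
    (hdvd : f ∣ t * derivative f) (hβ : f.IsRoot β) : t.IsRoot β := by
  by_contra ht
  have ht0 : t ≠ 0 := by rintro rfl; exact ht (by simp)
  have hf' : derivative f ≠ 0 := by
    intro h
    rw [eq_C_of_derivative_eq_zero h, IsRoot, eval_C] at hβ
    exact hf (by rw [eq_C_of_derivative_eq_zero h, hβ, C_0])
  have hle := rootMultiplicity_le_rootMultiplicity_of_dvd (mul_ne_zero ht0 hf') hdvd β
  rw [rootMultiplicity_mul (mul_ne_zero ht0 hf'), derivative_rootMultiplicity_of_root hβ,
    rootMultiplicity_eq_zero ht] at hle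
  have := (rootMultiplicity_pos hf).2 hβ
  omega

theorem not_dvd_derivative_mul_derivative_add {f t : F[X]} {β : F} (hf : f ≠ 0)
    (hβ : f.IsRoot β) (htβ : t.IsRoot β) (ht'β : (derivative t).eval β ≠ 0) :
    ¬ f ∣ derivative t * derivative f + 2 * t * derivative (derivative f) := by
  intro hdvd
  have he : X - C β ≠ 0 := X_sub_C_ne_zero β
  obtain ⟨g, hfg, hg⟩ := exists_eq_pow_rootMultiplicity_mul_and_not_dvd f hf β
  obtain ⟨k, hk⟩ : ∃ k, f.rootMultiplicity β = k + 1 :=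
    Nat.exists_eq_add_one.mpr ((rootMultiplicity_pos hf).2 hβ)
  rw [hk] at hfg
  obtain ⟨τ, hτ⟩ := dvd_iff_isRoot.mpr htβ
  have hτβ : τ.eval β = (derivative t).eval β := by simp [hτ]
  set P := (k + 1 : F[X]) * g + (X - C β) * derivative g
  have hf' : derivative f = (X - C β) ^ k * P := by
    refine mul_left_cancel₀ he ?_
    rw [hfg, mul_derivative_pow_mul, derivative_X_sub_C, pow_succ]
    push_cast
    ring
  set S := derivative t * P + 2 * τ * ((k : F[X]) * P + (X - C β) * derivative P)
  have hL : derivative t * derivative f + 2 * t * derivative (derivative f)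
      = (X - C β) ^ k * S := by
    have := mul_derivative_pow_mul (X - C β) P k
    rw [derivative_X_sub_C, mul_one] at this
    rw [hf']
    linear_combination (2 * τ) * this + 2 * derivative ((X - C β) ^ k * P) * hτ
  have hS : (X - C β) ∣ S := by
    have : (X - C β) ^ k * (X - C β) ∣ (X - C β) ^ k * S := by
      rw [← pow_succ, ← hL]; exact (Dvd.intro g hfg.symm).trans hdvd
    exact (mul_dvd_mul_iff_left (pow_ne_zero k he)).mp this
  have hSβ : S.eval β = (2 * k + 1) * (k + 1) * g.eval β * (derivative t).eval β := by
    simp only [derivative_add, derivative_mul, derivative_natCast, derivative_one, add_zero,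
      zero_mul, zero_add, derivative_sub, derivative_X, derivative_C, sub_zero, one_mul, eval_add,
      eval_mul, eval_natCast, eval_one, eval_sub, eval_X, eval_C, sub_self, eval_ofNat, hτβ, S, P]
    ring
  have hk0 : (2 * k + 1 : F) ≠ 0 := by exact_mod_cast (2 * k).succ_ne_zero
  have hgβ : g.eval β ≠ 0 := fun h => hg (dvd_iff_isRoot.mpr h)
  rw [dvd_iff_isRoot.mp hS] at hSβ
  exact mul_ne_zero (mul_ne_zero (mul_ne_zero hk0 (Nat.cast_add_one_ne_zero k)) hgβ) ht'β
    hSβ.symm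

theorem Separable.isUnit_of_dvd {f t : F[X]} (ht : t.Separable) (hf : f ≠ 0)
    (h₁ : f ∣ t * derivative f)
    (h₂ : f ∣ derivative t * derivative f + 2 * t * derivative (derivative f)) : IsUnit f := by
  by_contra hu
  let φ := algebraMap F (AlgebraicClosure F)
  have hfφ : f.map φ ≠ 0 := Polynomial.map_ne_zero hf
  obtain ⟨β, hβ⟩ := IsAlgClosed.exists_root (f.map φ)
    (by rwa [degree_map, Ne, ← isUnit_iff_degree_eq_zero])
  have htβ : (t.map φ).IsRoot β :=
    hβ.of_dvd_mul_derivative hfφ (by simpa [derivative_map] using Polynomial.map_dvd φ h₁)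
  refine not_dvd_derivative_mul_derivative_add hfφ hβ htβ ?_
    (by simpa [derivative_map] using Polynomial.map_dvd φ h₂)
  rw [derivative_map, eval_map_algebraMap]
  exact ht.aeval_derivative_ne_zero (by rwa [← eval_map_algebraMap])

theorem natDegree_X_sub_X_pow_three {R : Type*} [CommRing R] [Nontrivial R] :
    (X - X ^ 3 : R[X]).natDegree = 3 := by
  compute_degree!

theorem separable_X_sub_X_pow_three : (X - X ^ 3 : F[X]).Separable := by
  have hc : C (1 / 2 : F) * 2 = 1 := by
    rw [← map_ofNat C 2, ← C_mul, one_div_mul_cancel two_ne_zero, C_1]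
  refine ⟨9 * C (1 / 2) * X, 1 - 3 * C (1 / 2) * X ^ 2, ?_⟩
  simp only [derivative_sub, derivative_X, derivative_X_pow, Nat.cast_ofNat, map_ofNat]
  linear_combination (3 * X ^ 2) * hc

end Polynomial

namespace Derivation

variable {R A : Type*} [CommRing R] [CommRing A] [Algebra R A]

def restrict (D : Derivation R A A) (S : Subalgebra R A) (hS : ∀ a : S, D a ∈ S) :
    Derivation R S S :=
  Derivation.mk' ((D.toLinearMap.comp S.val.toLinearMap).codRestrict S.toSubmodule hS)
    fun a b => Subtype.ext <| by
      change D ((a : A) * b) = a * D b + b * D a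
      rw [D.leibniz, smul_eq_mul, smul_eq_mul]

end Derivation

open Polynomial in
theorem Algebra.exists_eq_aeval_add_aeval_mul_of_mem_adjoin {R B : Type*} [CommRing R]
    [CommRing B] [Algebra R B] {u w : B} {t : R[X]} (hw : w ^ 2 = aeval u t) {a : B}
    (ha : a ∈ Algebra.adjoin R {u, w}) : ∃ p q : R[X], a = aeval u p + aeval u q * w := by
  induction ha using Algebra.adjoin_induction with
  | mem x hx =>
    rcases hx with rfl | rfl
    · exact ⟨X, 0, by simp⟩
    · exact ⟨0, 1, by simp⟩
  | algebraMap r => exact ⟨C r, 0, by simp⟩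
  | add x y _ _ hx hy =>
    obtain ⟨p, q, rfl⟩ := hx
    obtain ⟨r, s, rfl⟩ := hy
    exact ⟨p + r, q + s, by simp only [map_add]; ring⟩
  | mul x y _ _ hx hy =>
    obtain ⟨p, q, rfl⟩ := hx
    obtain ⟨r, s, rfl⟩ := hy
    refine ⟨p * r + q * s * t, p * s + q * r, ?_⟩
    simp only [map_add, map_mul]
    linear_combination (aeval u q * aeval u s) * hw

open Polynomial in
theorem Ideal.comap_aeval_ne_bot {F A : Type*} [Field F] [CommRing A] [Algebra F A]
    {t : F[X]} (ht_odd : Odd t.natDegree) {u w : A} (hw : w ^ 2 = aeval u t)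
    (hspan : ∀ a : A, ∃ p q : F[X], a = aeval u p + aeval u q * w)
    {I : Ideal A} (hI : I ≠ ⊥) : I.comap (aeval (R := F) u) ≠ ⊥ := by
  obtain ⟨a, haI, ha0⟩ := Submodule.exists_mem_ne_zero_of_ne_bot hI
  obtain ⟨p, q, rfl⟩ := hspan a
  have hpq : p ≠ 0 ∨ q ≠ 0 := by
    contrapose! ha0
    simp [ha0]
  have hnorm : aeval u (p ^ 2 - q ^ 2 * t)
      = (aeval u p + aeval u q * w) * (aeval u p - aeval u q * w) := by
    simp only [map_sub, map_mul, map_pow, ← hw]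
    ring
  refine (Submodule.ne_bot_iff _).mpr ⟨_, ?_, sq_sub_sq_mul_ne_zero ht_odd hpq⟩
  rw [Ideal.mem_comap, hnorm]
  exact I.mul_mem_right _ haI

open Polynomial in
theorem Ideal.eq_top_of_derivation_mem {F A : Type*} [Field F] [CharZero F] [CommRing A]
    [Algebra F A] (δ : Derivation F A A) {t : F[X]} (ht : t.Separable)
    (ht_odd : Odd t.natDegree) {u w : A} (hw : w ^ 2 = aeval u t) (hδu : δ u = -2 * w)
    (hδw : δ w = -aeval u (derivative t))
    (hspan : ∀ a : A, ∃ p q : F[X], a = aeval u p + aeval u q * w)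
    {I : Ideal A} (hI : I ≠ ⊥) (hδI : ∀ a ∈ I, δ a ∈ I) : I = ⊤ := by
  have hδp (p : F[X]) : δ (aeval u p) = aeval u (derivative p) * δ u := by
    rw [Derivation.map_aeval, smul_eq_mul]
  have hδδu : δ (δ u) = 2 * aeval u (derivative t) := by
    rw [hδu, show -2 * w = -(w + w) by ring, Derivation.map_neg, map_add, hδw]
    ring
  set J := I.comap (aeval (R := F) u)
  set f := Submodule.IsPrincipal.generator J
  have hf : f ≠ 0 := by
    rw [Ne, ← Submodule.IsPrincipal.eq_bot_iff_generator_eq_zero]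
    exact Ideal.comap_aeval_ne_bot ht_odd hw hspan hI
  have hδf : δ (aeval u f) ∈ I := hδI _ (Submodule.IsPrincipal.generator_mem J)
  have h₁ : f ∣ -2 * (t * derivative f) := by
    rw [← Submodule.IsPrincipal.mem_iff_generator_dvd, Ideal.mem_comap]
    convert I.mul_mem_right w hδf using 1
    rw [hδp, hδu]
    simp only [map_mul, map_neg, map_ofNat, ← hw]
    ring
  have h₂ : f ∣ 2 * (derivative t * derivative f + 2 * t * derivative (derivative f)) := by
    rw [← Submodule.IsPrincipal.mem_iff_generator_dvd, Ideal.mem_comap]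
    convert hδI _ hδf using 1
    rw [hδp, Derivation.leibniz, hδp, hδδu, hδu]
    simp only [map_mul, map_add, map_ofNat, ← hw, smul_eq_mul]
    ring
  have h2 : IsUnit (2 : F[X]) := by
    rw [← map_ofNat Polynomial.C 2]
    exact isUnit_C.mpr (IsUnit.mk0 _ two_ne_zero)
  have hunit : IsUnit f :=
    ht.isUnit_of_dvd hf (h2.neg.dvd_mul_left.mp h₁) (h2.dvd_mul_left.mp h₂)
  rw [← Ideal.comap_eq_top_iff (f := aeval (R := F) u)]
  change J = ⊤
  rw [← Submodule.IsPrincipal.span_singleton_generator J]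
  exact Ideal.span_singleton_eq_top.mpr hunit

section
variable (F : Type*) [Field F]

theorem xG_sq_add_yG_pow_four : xG F ^ 2 + yG F ^ 4 = 1 := by
  rw [← sub_eq_zero, ← map_pow, ← map_pow, ← map_add, ← map_one (Ideal.Quotient.mk _),
    ← map_sub, Ideal.Quotient.eq_zero_iff_mem]
  exact Ideal.subset_span rfl

noncomputable def ySqA : AG F := ⟨yG F ^ 2, Algebra.subset_adjoin (by simp)⟩

noncomputable def xyA : AG F := ⟨xG F * yG F, Algebra.subset_adjoin (by simp)⟩

theorem xyA_sq :
    xyA F ^ 2 = Polynomial.aeval (ySqA F) (Polynomial.X - Polynomial.X ^ 3 : Polynomial F) := by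
  apply Subtype.ext
  rw [SubmonoidClass.coe_pow, Polynomial.aeval_subalgebra_coe]
  simp only [Polynomial.aeval_sub, Polynomial.aeval_X, map_pow, xyA, ySqA]
  linear_combination yG F ^ 2 * xG_sq_add_yG_pow_four F

theorem exists_eq_aeval_add_aeval_mul_xyA (a : AG F) :
    ∃ p q : Polynomial F,
      a = Polynomial.aeval (ySqA F) p + Polynomial.aeval (ySqA F) q * xyA F := by
  have hw := congrArg Subtype.val (xyA_sq F)
  rw [SubmonoidClass.coe_pow, Polynomial.aeval_subalgebra_coe] at hw
  obtain ⟨p, q, hpq⟩ := Algebra.exists_eq_aeval_add_aeval_mul_of_mem_adjoin hw a.2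
  refine ⟨p, q, Subtype.ext ?_⟩
  rw [Subalgebra.coe_add, Subalgebra.coe_mul, Polynomial.aeval_subalgebra_coe,
    Polynomial.aeval_subalgebra_coe]
  exact hpq

variable {F} {D : Derivation F (Gam F) (Gam F)}
  (hD : ∀ p : MvPolynomial (Fin 2) F, D (Ideal.Quotient.mk _ p) = Ideal.Quotient.mk _ (Dxy F p))
  (hDA : ∀ a : AG F, D a ∈ AG F)
include hD

theorem derivation_xG : D (xG F) = 2 * yG F ^ 3 := by
  rw [hD, Dxy, mkDerivation_X]
  simp only [Matrix.cons_val_zero, map_mul, map_pow, map_ofNat]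

theorem derivation_yG : D (yG F) = -xG F := by
  rw [hD, Dxy, mkDerivation_X]
  simp only [Matrix.cons_val_one, Matrix.cons_val_fin_one, map_neg]

theorem restrict_ySqA : D.restrict (AG F) hDA (ySqA F) = -2 * xyA F := by
  apply Subtype.ext
  change D (yG F ^ 2) = -2 * (xG F * yG F)
  rw [Derivation.leibniz_pow, derivation_yG hD, Nat.add_one_sub_one, pow_one, smul_eq_mul,
    nsmul_eq_mul]
  push_cast
  ring

theorem restrict_xyA :
    D.restrict (AG F) hDA (xyA F) = -Polynomial.aeval (ySqA F)
      (Polynomial.derivative (Polynomial.X - Polynomial.X ^ 3 : Polynomial F)) := by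
  apply Subtype.ext
  change D (xG F * yG F) = _
  rw [Derivation.leibniz, derivation_xG hD, derivation_yG hD, NegMemClass.coe_neg,
    Polynomial.aeval_subalgebra_coe]
  simp only [Polynomial.derivative_sub, Polynomial.derivative_X, Polynomial.derivative_X_pow,
    Polynomial.aeval_sub, Polynomial.aeval_X, Nat.cast_ofNat, map_one, map_mul, map_ofNat, map_pow,
    smul_eq_mul, ySqA]
  linear_combination (-1 : Gam F) * xG_sq_add_yG_pow_four F

end

theorem stmt10 (F : Type*) [Field F] [CharZero F]
    (D' : Derivation F (Gam F) (Gam F))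
    (hD' : ∀ p : MvPolynomial (Fin 2) F,
      D' (Ideal.Quotient.mk _ p) = Ideal.Quotient.mk _ (Dxy F p))
    (hDA : ∀ a : AG F, D' (a : Gam F) ∈ AG F)
    (I : Ideal (AG F)) (hI : I ≠ ⊥)
    (hinv : ∀ a : AG F, a ∈ I → (⟨D' (a : Gam F), hDA a⟩ : AG F) ∈ I) :
    I = ⊤ :=
  Ideal.eq_top_of_derivation_mem (D'.restrict (AG F) hDA) Polynomial.separable_X_sub_X_pow_three
    (by rw [Polynomial.natDegree_X_sub_X_pow_three]; decide) (xyA_sq F)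
    (restrict_ySqA hD' hDA) (restrict_xyA hD' hDA) (exists_eq_aeval_add_aeval_mul_xyA F) hI hinv
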